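/- arXiv:1511.00213 — 3 statements merged into one kernel-verified Lean document; each statement's English description precedes it below -/
import Mathlib

section
/- Let s_1 <= s_2 <= ... <= s_k be reals and y_1,...,y_k in [0,1]. The isotonic regression fit f* minimizing sum_i (f(s_i) - y_i)^2 over nondecreasing functions f satisfies: for every i, the fitted value f*(s_i) equals the slope of the greatest convex minorant of the cumulative sum diagram P_j = (sum_{l<=j} w_l, sum_{l<=j} y'_l w_l) over the interval corresponding to s_i, where s'_1 < ... < s'_{k'} are the distinct scores, w_j their multiplicities, and y'_j the average label at s'_j. -/
/-!
Let `v j = f (s' j)`. Grouping the data by score, the squared error of any monotone `g` is the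
weighted error `∑ j, w j * (g (s' j) - y' j) ^ 2` plus a constant, so `v` is a weighted isotonic
regression of `y'`. Raising or lowering `v` by a constant on a prefix `{l < n}`, whenever this keeps
it monotone, shows that the cumulative fitted sums `G n = cumY w v n` stay below the diagram and
touch it wherever `v` jumps, as well as at both ends. The maximum of the lines through
`(cumW j, G j)` with slope `v j` is then a convex minorant of the diagram passing through every
`(cumW n, G n)`; conversely a convex minorant lies, on each level block of `v`, below the chord
joining the two touching endpoints of the block, which is the graph of `G`. Hence the greatest
convex minorant passes through `(cumW n, G n)`, and its slope over the `j`-th interval is `v j`.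
-/

/-- The greatest convex minorant of a set of points `P ⊆ ℝ × ℝ`, evaluated
at `t`: the supremum over all convex functions lying below the points. -/
noncomputable def gcm (P : Set (ℝ × ℝ)) (t : ℝ) : ℝ :=
  sSup {v : ℝ | ∃ c : ℝ → ℝ, ConvexOn ℝ Set.univ c ∧
    (∀ q ∈ P, c q.1 ≤ q.2) ∧ v = c t}

/-- Cumulative weight before index `n`. -/
noncomputable def cumW {k' : ℕ} (w : Fin k' → ℕ) (n : ℕ) : ℝ :=
  ∑ l ∈ Finset.univ.filter (fun l : Fin k' => (l : ℕ) < n), (w l : ℝ)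

/-- Cumulative weighted label before index `n`. -/
noncomputable def cumY {k' : ℕ} (w : Fin k' → ℕ) (y' : Fin k' → ℝ) (n : ℕ) : ℝ :=
  ∑ l ∈ Finset.univ.filter (fun l : Fin k' => (l : ℕ) < n), y' l * (w l : ℝ)

/-- The cumulative sum diagram (CSD) of the data. -/
noncomputable def csd {k' : ℕ} (w : Fin k' → ℕ) (y' : Fin k' → ℝ) : Set (ℝ × ℝ) :=
  {p | ∃ n ≤ k', p = (cumW w n, cumY w y' n)}

open Finset Filter Topology

lemma sum_sq_sub_eq_card_mul_add {ι : Type*} (s : Finset ι) (y : ι → ℝ) (t : ℝ) :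
    ∑ i ∈ s, (t - y i) ^ 2 =
      #s * (t - (∑ i ∈ s, y i) / #s) ^ 2 + ∑ i ∈ s, ((∑ i ∈ s, y i) / #s - y i) ^ 2 := by
  rcases s.eq_empty_or_nonempty with rfl | hs
  · simp
  set m := (∑ i ∈ s, y i) / #s
  have hm : (#s : ℝ) * m = ∑ i ∈ s, y i := mul_div_cancel₀ _ (by simp [hs.ne_empty])
  calc ∑ i ∈ s, (t - y i) ^ 2
      = ∑ i ∈ s, ((t - m) ^ 2 + 2 * (t - m) * (m - y i) + (m - y i) ^ 2) :=
        sum_congr rfl fun i _ => by ring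
    _ = #s * (t - m) ^ 2 + 2 * (t - m) * (#s * m - ∑ i ∈ s, y i) + ∑ i ∈ s, (m - y i) ^ 2 := by
        rw [sum_add_distrib, sum_add_distrib, ← mul_sum, sum_sub_distrib]
        simp only [sum_const, nsmul_eq_mul]
    _ = #s * (t - m) ^ 2 + ∑ i ∈ s, (m - y i) ^ 2 := by rw [hm]; ring

lemma exists_sum_sq_comp_eq {ι β : Type*} [Fintype ι] [Fintype β] [DecidableEq β] (κ : ι → β)
    (y : ι → ℝ) (w : β → ℕ) (hw : ∀ j, w j = #{i | κ i = j}) (y' : β → ℝ)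
    (hy' : ∀ j, y' j = (∑ i with κ i = j, y i) / w j) :
    ∃ C, ∀ H : β → ℝ, ∑ i, (H (κ i) - y i) ^ 2 = ∑ j, (w j : ℝ) * (H j - y' j) ^ 2 + C := by
  refine ⟨∑ j, ∑ i with κ i = j, (y' j - y i) ^ 2, fun H => ?_⟩
  rw [← sum_fiberwise univ κ, ← sum_add_distrib]
  refine sum_congr rfl fun j _ => ?_
  rw [sum_congr rfl fun i hi => by rw [(mem_filter.1 hi).2], sum_sq_sub_eq_card_mul_add, hy', hw]

lemma StrictMono.exists_monotone_comp_eq {β : Type*} [Finite β] [LinearOrder β] {e : β → ℝ}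
    (he : StrictMono e) {u : β → ℝ} (hu : Monotone u) :
    ∃ g : ℝ → ℝ, Monotone g ∧ ∀ j, g (e j) = u j := by
  have hfin := (Set.finite_range e).image (Function.extend e u 0)
  obtain ⟨g, hg, hgu⟩ := MonotoneOn.exists_monotone_extension (s := Set.range e)
    (fun _ ⟨i, hi⟩ _ ⟨j, hj⟩ hij => by
      subst hi hj
      rw [he.injective.extend_apply, he.injective.extend_apply]
      exact hu (he.le_iff_le.1 hij))
    hfin.bddBelow hfin.bddAbove
  exact ⟨g, hg, fun j => by rw [← hgu (Set.mem_range_self j), he.injective.extend_apply]⟩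

lemma isMinOn_sum_mul_sq_of_forall_monotone {ι β : Type*} [Fintype ι] [Fintype β] [LinearOrder β]
    {κ : ι → β} {e : β → ℝ} (he : StrictMono e) {y : ι → ℝ} {w y' : β → ℝ} {C : ℝ}
    (hC : ∀ H : β → ℝ, ∑ i, (H (κ i) - y i) ^ 2 = ∑ j, w j * (H j - y' j) ^ 2 + C) {f : ℝ → ℝ}
    (hmin : ∀ g : ℝ → ℝ, Monotone g →
      ∑ i, (f (e (κ i)) - y i) ^ 2 ≤ ∑ i, (g (e (κ i)) - y i) ^ 2) :
    IsMinOn (fun u => ∑ j, w j * (u j - y' j) ^ 2) {u | Monotone u} (f ∘ e) := by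
  refine isMinOn_iff.2 fun u hu => ?_
  obtain ⟨g, hg, hgu⟩ := he.exists_monotone_comp_eq hu
  have h₁ := hC (f ∘ e)
  have h₂ := hC u
  simp only [Function.comp_apply, ← hgu] at h₁ h₂ ⊢
  linarith [hmin g hg]

lemma nonneg_of_forall_add_mul_nonneg {a b : ℝ} (h : ∀ t ∈ Set.Ioc (0 : ℝ) 1, 0 ≤ a + t * b) :
    0 ≤ a := by
  have hlim : Tendsto (fun t : ℝ => a + t * b) (𝓝[>] 0) (𝓝 a) := by
    have : Continuous fun t : ℝ => a + t * b := by fun_prop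
    simpa using (this.tendsto 0).mono_left nhdsWithin_le_nhds
  exact ge_of_tendsto hlim (by filter_upwards [Ioc_mem_nhdsGT zero_lt_one] using h)

lemma IsMinOn.sum_mul_sub_mul_sub_nonneg {ι : Type*} [Fintype ι] {K : Set (ι → ℝ)}
    (hK : Convex ℝ K) {w y v u : ι → ℝ} (hmin : IsMinOn (fun u => ∑ j, w j * (u j - y j) ^ 2) K v)
    (hv : v ∈ K) (hu : u ∈ K) : 0 ≤ ∑ j, w j * (v j - y j) * (u j - v j) := by
  set A := ∑ j, w j * (v j - y j) * (u j - v j)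
  set B := ∑ j, w j * (u j - v j) ^ 2
  refine nonneg_of_forall_add_mul_nonneg (b := B / 2) fun t ht => ?_
  have hmin_t := isMinOn_iff.1 hmin _ (hK.add_smul_sub_mem hv hu ⟨ht.1.le, ht.2⟩)
  have hexpand : ∑ j, w j * ((v + t • (u - v)) j - y j) ^ 2 =
      ∑ j, w j * (v j - y j) ^ 2 + 2 * t * A + t ^ 2 * B := by
    simp only [A, B, Pi.add_apply, Pi.smul_apply, Pi.sub_apply, smul_eq_mul, mul_sum,
      ← sum_add_distrib]
    exact sum_congr rfl fun j _ => by ring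
  have : 0 ≤ 2 * t * (A + t * (B / 2)) := by linarith
  exact (mul_nonneg_iff_of_pos_left (by linarith [ht.1])).1 this

lemma convex_setOf_monotone {ι : Type*} [Preorder ι] : Convex ℝ {u : ι → ℝ | Monotone u} := by
  intro u hu v hv a b ha hb _ i j hij
  simp only [Pi.add_apply, Pi.smul_apply, smul_eq_mul]
  exact add_le_add (mul_le_mul_of_nonneg_left (hu hij) ha) (mul_le_mul_of_nonneg_left (hv hij) hb)

/-- Vacuously true at `n = 0` and `n ≥ k'`, so both ends of the diagram count as cuts. -/
def IsCut {k' : ℕ} (v : Fin k' → ℝ) (n : ℕ) : Prop :=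
  ∀ i j : Fin k', (i : ℕ) < n → n ≤ (j : ℕ) → v i < v j

section CumulativeSums

variable {k' : ℕ} (w : Fin k' → ℕ)

lemma filter_val_lt_succ (j : Fin k') :
    univ.filter (fun l : Fin k' => (l : ℕ) < j + 1) =
      insert j (univ.filter fun l : Fin k' => (l : ℕ) < j) := by
  ext l
  simp only [mem_filter, mem_univ, true_and, mem_insert, Fin.ext_iff]
  omega

lemma cumW_succ (j : Fin k') : cumW w (j + 1) = cumW w j + w j := by
  rw [cumW, filter_val_lt_succ, sum_insert (by simp), add_comm, cumW]

lemma cumY_succ (v : Fin k' → ℝ) (j : Fin k') : cumY w v (j + 1) = cumY w v j + v j * w j := by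
  rw [cumY, filter_val_lt_succ, sum_insert (by simp), add_comm, cumY]

lemma cumW_mono : Monotone (cumW w) := fun m n hmn =>
  sum_le_sum_of_subset_of_nonneg (fun l => by simp only [mem_filter, mem_univ, true_and]; omega)
    (fun _ _ _ => Nat.cast_nonneg _)

lemma cumY_sub_sub_mul_cumW (v : Fin k' → ℝ) (c : ℝ) (m n : ℕ) :
    cumY w v m - cumY w v n - c * (cumW w m - cumW w n) =
      ∑ l : Fin k', ((if (l : ℕ) < m then 1 else 0) - (if (l : ℕ) < n then 1 else 0)) *
        ((w l : ℝ) * (v l - c)) := by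
  simp only [cumY, cumW, sum_filter, mul_sum, ← sum_sub_distrib]
  refine sum_congr rfl fun l _ => ?_
  split_ifs <;> ring

variable {w}

lemma mul_cumW_sub_le_cumY_sub {v : Fin k' → ℝ} (hv : Monotone v) (j : Fin k') (m : ℕ) :
    v j * (cumW w m - cumW w j) ≤ cumY w v m - cumY w v j := by
  suffices 0 ≤ cumY w v m - cumY w v j - v j * (cumW w m - cumW w j) by linarith
  rw [cumY_sub_sub_mul_cumW]
  refine sum_nonneg fun l _ => ?_
  have hw : (0 : ℝ) ≤ w l := Nat.cast_nonneg _
  split_ifs with hm hj hj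
  · simp
  · nlinarith [hv (show j ≤ l from not_lt.1 hj)]
  · nlinarith [hv (show l ≤ j from hj.le)]
  · simp

lemma cumY_sub_eq_mul_of_forall_eq {v : Fin k' → ℝ} {a b : ℕ} {c : ℝ}
    (hc : ∀ l : Fin k', a ≤ l → (l : ℕ) < b → v l = c) {m : ℕ} (ham : a ≤ m) (hmb : m ≤ b) :
    cumY w v m - cumY w v a = c * (cumW w m - cumW w a) := by
  suffices cumY w v m - cumY w v a - c * (cumW w m - cumW w a) = 0 by linarith
  rw [cumY_sub_sub_mul_cumW]
  refine sum_eq_zero fun l _ => ?_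
  split_ifs with hm ha
  · simp
  · simp [hc l (not_lt.1 ha) (by omega)]
  · omega
  · simp

end CumulativeSums

lemma IsCut.exists_gap {k' : ℕ} {v : Fin k' → ℝ} {n : ℕ} (h : IsCut v n) :
    ∃ δ > 0, ∀ i j : Fin k', (i : ℕ) < n → n ≤ (j : ℕ) → v i + δ ≤ v j := by
  have : ∀ᶠ δ in 𝓝[>] (0 : ℝ), ∀ i j : Fin k', (i : ℕ) < n → n ≤ (j : ℕ) → v i + δ ≤ v j := by
    simp only [eventually_all]
    intro i j hi hj
    filter_upwards [nhdsWithin_le_nhds (eventually_le_nhds (sub_pos.2 (h i j hi hj)))]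
      with δ hδ
    linarith
  obtain ⟨δ, hδ, hδ0⟩ := (this.and self_mem_nhdsWithin).exists
  exact ⟨δ, hδ0, hδ⟩

lemma Monotone.exists_isCut_block {k' : ℕ} {v : Fin k' → ℝ} (hv : Monotone v) (N : Fin k') :
    ∃ a b : ℕ, a ≤ N ∧ (N : ℕ) < b ∧ b ≤ k' ∧ IsCut v a ∧ IsCut v b ∧
      ∀ l : Fin k', a ≤ l → (l : ℕ) < b → v l = v N := by
  classical
  set S := univ.filter fun l => v l = v N
  have hN : N ∈ S := by simp [S]
  have hmem : ∀ {l}, l ∈ S ↔ v l = v N := by simp [S]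
  have hmin := hmem.1 (S.min'_mem ⟨N, hN⟩)
  have hmax := hmem.1 (S.max'_mem ⟨N, hN⟩)
  refine ⟨S.min' ⟨N, hN⟩, S.max' ⟨N, hN⟩ + 1, S.min'_le N hN,
    Nat.lt_succ_of_le (S.le_max' N hN), (S.max' _).isLt, ?_, ?_, ?_⟩
  · intro i j hi hj
    have hne : v i ≠ v N := fun h => (Fin.lt_def.2 hi).not_ge (S.min'_le i (hmem.2 h))
    have := hv (Fin.le_def.2 hj)
    exact (hmin ▸ hv (Fin.le_def.2 hi.le)).lt_of_ne hne |>.trans_le (hmin ▸ this)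
  · intro i j hi hj
    have hne : v j ≠ v N := fun h => (Nat.lt_of_succ_le hj).not_ge (S.le_max' j (hmem.2 h))
    exact (hmax ▸ hv (Fin.le_def.2 (Nat.lt_succ_iff.1 hi))).trans_lt
      ((hmax ▸ hv (Fin.le_def.2 (Nat.le_of_succ_le hj))).lt_of_ne hne.symm)
  · intro l hal hlb
    exact le_antisymm (hmax ▸ hv (Fin.le_def.2 (Nat.lt_succ_iff.1 hlb)))
      (hmin ▸ hv (Fin.le_def.2 hal))

lemma Monotone.add_ite_lt {k' : ℕ} {v : Fin k' → ℝ} (hv : Monotone v) {n : ℕ} {δ : ℝ}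
    (hδ : ∀ i j : Fin k', (i : ℕ) < n → n ≤ (j : ℕ) → v i + δ ≤ v j) :
    Monotone fun j : Fin k' => v j + if (j : ℕ) < n then δ else 0 := by
  intro i j hij
  have hvij := hv hij
  have hij' : (i : ℕ) ≤ j := hij
  dsimp only
  split_ifs with hi hj hj
  · linarith
  · linarith [hδ i j hi (not_lt.1 hj)]
  · omega
  · linarith

section IsotonicOptimality

variable {k' : ℕ} {w : Fin k' → ℕ} {y v : Fin k' → ℝ}

lemma IsMinOn.mul_cumY_sub_nonneg
    (hmin : IsMinOn (fun u => ∑ j, (w j : ℝ) * (u j - y j) ^ 2) {u | Monotone u} v)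
    (hv : Monotone v) {n : ℕ} {δ : ℝ}
    (hδ : ∀ i j : Fin k', (i : ℕ) < n → n ≤ (j : ℕ) → v i + δ ≤ v j) :
    0 ≤ δ * (cumY w v n - cumY w y n) := by
  have h := hmin.sum_mul_sub_mul_sub_nonneg convex_setOf_monotone hv (hv.add_ite_lt hδ)
  have hsum : ∑ j, (w j : ℝ) * (v j - y j) * ((v j + if (j : ℕ) < n then δ else 0) - v j) =
      δ * (cumY w v n - cumY w y n) := by
    simp only [cumY, ← sum_sub_distrib, mul_sum, sum_filter]
    exact sum_congr rfl fun j _ => by split_ifs <;> ring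
  rwa [hsum] at h

lemma IsMinOn.cumY_le
    (hmin : IsMinOn (fun u => ∑ j, (w j : ℝ) * (u j - y j) ^ 2) {u | Monotone u} v)
    (hv : Monotone v) (n : ℕ) : cumY w v n ≤ cumY w y n := by
  have := hmin.mul_cumY_sub_nonneg hv (δ := -1) (n := n) fun i j hi hj =>
    by linarith [hv (Fin.le_def.2 (by omega : (i : ℕ) ≤ j))]
  linarith

lemma IsMinOn.cumY_eq_of_isCut
    (hmin : IsMinOn (fun u => ∑ j, (w j : ℝ) * (u j - y j) ^ 2) {u | Monotone u} v)
    (hv : Monotone v) {n : ℕ} (hcut : IsCut v n) : cumY w v n = cumY w y n := by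
  obtain ⟨δ, hδ0, hδ⟩ := hcut.exists_gap
  have := hmin.mul_cumY_sub_nonneg hv hδ
  exact le_antisymm (hmin.cumY_le hv n) (by nlinarith)

end IsotonicOptimality

lemma convexOn_affine (p q : ℝ) : ConvexOn ℝ Set.univ fun t => p + q * t :=
  ⟨convex_univ, fun x _ z _ a b _ _ hab => le_of_eq <| by
    simp only [smul_eq_mul]; linear_combination (-p) * hab⟩

lemma ConvexOn.le_affine_of_le_of_le {c : ℝ → ℝ} (hc : ConvexOn ℝ Set.univ c) {p q x t z : ℝ}
    (hxt : x ≤ t) (htz : t ≤ z) (hx : c x ≤ p + q * x) (hz : c z ≤ p + q * z) :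
    c t ≤ p + q * t := by
  have h := (hc.add (convexOn_affine (-p) (-q))).le_on_segment (Set.mem_univ x) (Set.mem_univ z)
    (by rw [segment_eq_Icc (hxt.trans htz)]; exact ⟨hxt, htz⟩)
  have : max (c x + (-p + -q * x)) (c z + (-p + -q * z)) ≤ 0 :=
    max_le (by linarith) (by linarith)
  simp only [Pi.add_apply] at h
  linarith

section GreatestConvexMinorant

variable {k' : ℕ} {w : Fin k' → ℕ} {y' v : Fin k' → ℝ}

lemma exists_convexOn_le_csd (hk' : 0 < k') (hv : Monotone v)
    (hle : ∀ n, cumY w v n ≤ cumY w y' n) :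
    ∃ c : ℝ → ℝ, ConvexOn ℝ Set.univ c ∧ (∀ q ∈ csd w y', c q.1 ≤ q.2) ∧
      ∀ n ≤ k', c (cumW w n) = cumY w v n := by
  set L : Fin k' → ℝ → ℝ := fun j t => (cumY w v j - v j * cumW w j) + v j * t
  have hne : (univ : Finset (Fin k')).Nonempty := univ_nonempty_iff.2 ⟨⟨0, hk'⟩⟩
  have hval : ∀ n ≤ k', univ.sup' hne L (cumW w n) = cumY w v n := by
    intro n hn
    rw [Finset.sup'_apply]
    refine le_antisymm (sup'_le _ _ fun j _ => ?_) ?_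
    · have := mul_cumW_sub_le_cumY_sub (w := w) hv j n
      simp only [L]
      linarith
    · obtain ⟨j, hj⟩ : ∃ j : Fin k', n = j ∨ n = j + 1 :=
        if h : n < k' then ⟨⟨n, h⟩, Or.inl rfl⟩ else ⟨⟨k' - 1, by omega⟩, Or.inr (by simp; omega)⟩
      refine le_trans (le_of_eq ?_) (le_sup' (fun j => L j (cumW w n)) (mem_univ j))
      rcases hj with rfl | rfl
      · simp only [L]; ring
      · simp only [L, cumW_succ, cumY_succ]; ring
  refine ⟨univ.sup' hne L,
    sup'_induction hne L (p := ConvexOn ℝ Set.univ) (fun _ h₁ _ h₂ => h₁.sup h₂)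
      (fun j _ => convexOn_affine _ _), ?_, hval⟩
  rintro _ ⟨n, hn, rfl⟩
  rw [hval n hn]
  exact hle n

lemma ConvexOn.le_cumY_of_le_csd {c : ℝ → ℝ} (hc : ConvexOn ℝ Set.univ c)
    (hcle : ∀ q ∈ csd w y', c q.1 ≤ q.2) (hv : Monotone v)
    (htouch : ∀ n, IsCut v n → cumY w v n = cumY w y' n) {n : ℕ} (hn : n ≤ k') :
    c (cumW w n) ≤ cumY w v n := by
  have hcY : ∀ m ≤ k', c (cumW w m) ≤ cumY w y' m := fun m hm => hcle _ ⟨m, hm, rfl⟩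
  rcases hn.lt_or_eq with hn | rfl
  · obtain ⟨a, b, han, hnb, hbk, hcuta, hcutb, hconst⟩ := hv.exists_isCut_block ⟨n, hn⟩
    have hlin : ∀ m, a ≤ m → m ≤ b →
        cumY w v m = (cumY w v a - v ⟨n, hn⟩ * cumW w a) + v ⟨n, hn⟩ * cumW w m := by
      intro m ham hmb
      linarith [cumY_sub_eq_mul_of_forall_eq (w := w) hconst ham hmb]
    rw [hlin n han hnb.le]
    refine hc.le_affine_of_le_of_le (cumW_mono w han) (cumW_mono w hnb.le) ?_ ?_
    · rw [← hlin a le_rfl (han.trans hnb.le), htouch a hcuta]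
      exact hcY a (han.trans hn.le)
    · rw [← hlin b (han.trans hnb.le) le_rfl, htouch b hcutb]
      exact hcY b hbk
  · rw [htouch n fun i j _ hj => absurd j.isLt (not_lt.2 hj)]
    exact hcY n le_rfl

theorem gcm_csd_cumW (hk' : 0 < k') (hv : Monotone v) (hle : ∀ n, cumY w v n ≤ cumY w y' n)
    (htouch : ∀ n, IsCut v n → cumY w v n = cumY w y' n) {n : ℕ} (hn : n ≤ k') :
    gcm (csd w y') (cumW w n) = cumY w v n := by
  obtain ⟨c₀, hc₀, hc₀le, hc₀val⟩ := exists_convexOn_le_csd hk' hv hle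
  refine IsGreatest.csSup_eq ⟨⟨c₀, hc₀, hc₀le, (hc₀val n hn).symm⟩, ?_⟩
  rintro _ ⟨c, hc, hcle, rfl⟩
  exact hc.le_cumY_of_le_csd hcle hv htouch hn

end GreatestConvexMinorant

theorem stmt_14_general (k k' : ℕ) (s y : Fin k → ℝ)
    (s' : Fin k' → ℝ) (hs' : StrictMono s')
    (hcover : ∀ i, ∃ j, s i = s' j)
    (w : Fin k' → ℕ)
    (hw : ∀ j, w j = (Finset.univ.filter (fun i : Fin k => s i = s' j)).card)
    (hwpos : ∀ j, 0 < w j)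
    (y' : Fin k' → ℝ)
    (hy' : ∀ j, y' j =
      (∑ i ∈ Finset.univ.filter (fun i : Fin k => s i = s' j), y i) / (w j : ℝ))
    (f : ℝ → ℝ) (hf : Monotone f)
    (hmin : ∀ g : ℝ → ℝ, Monotone g →
      ∑ i, (f (s i) - y i) ^ 2 ≤ ∑ i, (g (s i) - y i) ^ 2) :
    ∀ i : Fin k, ∀ j : Fin k', s i = s' j →
      f (s i) =
        (gcm (csd w y') (cumW w (j + 1)) - gcm (csd w y') (cumW w j)) / (w j : ℝ) := by
  classical
  intro i j hij
  obtain ⟨κ, hκ⟩ : ∃ κ : Fin k → Fin k', ∀ i, s i = s' (κ i) :=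
    ⟨fun i => (hcover i).choose, fun i => (hcover i).choose_spec⟩
  have hfiber : ∀ j, univ.filter (fun i => s i = s' j) = univ.filter (fun i => κ i = j) :=
    fun j => by ext i; simp [hκ, hs'.injective.eq_iff]
  simp only [hfiber] at hw hy'
  simp only [hκ] at hmin
  obtain ⟨C, hC⟩ := exists_sum_sq_comp_eq κ y w hw y' hy'
  have hopt := isMinOn_sum_mul_sq_of_forall_monotone hs' hC hmin
  have hv : Monotone (f ∘ s') := hf.comp hs'.monotone
  have hgcm : ∀ n ≤ k', gcm (csd w y') (cumW w n) = cumY w (f ∘ s') n := fun n hn =>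
    gcm_csd_cumW j.pos hv (hopt.cumY_le hv) (fun _ => hopt.cumY_eq_of_isCut hv) hn
  rw [hgcm _ j.isLt, hgcm _ j.isLt.le, cumY_succ, hij, add_sub_cancel_left, Function.comp_apply,
    mul_div_cancel_right₀ _ (Nat.cast_ne_zero.2 (hwpos j).ne')]

/-- Barlow et al., Theorem 1.1: the isotonic regression fit equals the slope
of the greatest convex minorant of the cumulative sum diagram over the
interval corresponding to each score. -/
theorem stmt_14 (k k' : ℕ) (hk : 0 < k) (s y : Fin k → ℝ)
    (hs : Monotone s) (hy : ∀ i, y i ∈ Set.Icc (0:ℝ) 1)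
    (s' : Fin k' → ℝ) (hs' : StrictMono s')
    (hcover : ∀ i, ∃ j, s i = s' j)
    (w : Fin k' → ℕ)
    (hw : ∀ j, w j = (Finset.univ.filter (fun i : Fin k => s i = s' j)).card)
    (hwpos : ∀ j, 0 < w j)
    (y' : Fin k' → ℝ)
    (hy' : ∀ j, y' j =
      (∑ i ∈ Finset.univ.filter (fun i : Fin k => s i = s' j), y i) / (w j : ℝ))
    (f : ℝ → ℝ) (hf : Monotone f)
    (hmin : ∀ g : ℝ → ℝ, Monotone g →
      ∑ i, (f (s i) - y i) ^ 2 ≤ ∑ i, (g (s i) - y i) ^ 2) :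
    ∀ i : Fin k, ∀ j : Fin k', s i = s' j →
      f (s i) =
        (gcm (csd w y') (cumW w (j + 1)) - gcm (csd w y') (cumW w j)) / (w j : ℝ) :=
  stmt_14_general k k' s y s' hs' hcover w hw hwpos y' hy' f hf hmin
end

section
/- Let (X_1,Y_1),...,(X_l,Y_l),(X,Y) be i.i.d. random observations with Y in {0,1}, and let (P_0, P_1) be the IVAP prediction for X. Then there exists a selector S (a {0,1}-valued random variable) such that E(Y | P_S) = P_S almost surely; in fact S = Y works. -/
/-!
The selected prediction `P_Y` is the isotonic fit, at the test point, of the calibration sample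
together with the test object carrying its true label. Isotonic regression fits each level set by
the average label on it, so the residuals are orthogonal to every function of the fit:
`∑ j, (y j - f j) * φ (f j) = 0`. This is proved by peeling off the first block `[a₀, b₀]`
(the block of least average among those starting at the lowest score), on which the fit is
constant, and recursing on the higher scores. The fit is equivariant under permutations of the
calibration and test observations, which are exchangeable, so `E[(Y - P_Y) φ(P_Y)]` is the
average over `j` of `E[(y j - f j) φ (f j)]`, hence zero; for indicators `φ` this says
`E(Y | P_Y) = P_Y`.
-/

open MeasureTheory ProbabilityTheory

/-- The value at point `j` of the isotonic regression fitted to scores `s`,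
weights `w` and values `y`, via the standard minimax formula. -/
noncomputable def isoVal {n : ℕ} (s w y : Fin n → ℝ) (j : Fin n) : ℝ :=
  (Finset.univ.filter (fun a => s a ≤ s j)).sup'
    ⟨j, by simp⟩
    (fun a =>
      (Finset.univ.filter (fun b => s j ≤ s b)).inf'
        ⟨j, by simp⟩
        (fun b =>
          (∑ i ∈ Finset.univ.filter (fun i => s a ≤ s i ∧ s i ≤ s b), w i * y i) /
          (∑ i ∈ Finset.univ.filter (fun i => s a ≤ s i ∧ s i ≤ s b), w i)))

/-- The IVAP prediction `(f₀(s), f₁(s))`: isotonic regression fitted to the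
calibration scores/labels together with the test score `s` labelled `ε`,
evaluated at the test point. -/
noncomputable def ivapPred {𝓧 : Type*} {m k : ℕ}
    (A : (Fin m → 𝓧 × ℝ) → 𝓧 → ℝ)
    (train : Fin m → 𝓧 × ℝ) (calib : Fin k → 𝓧 × ℝ) (x : 𝓧) (ε : ℝ) : ℝ :=
  isoVal
    (Fin.snoc (fun i => A train (calib i).1) (A train x))
    (fun _ => 1)
    (Fin.snoc (fun i => (calib i).2) ε)
    (Fin.last k)

open Finset

noncomputable section

theorem sup'_filter_comp_equiv {ι α : Type*} [Fintype ι] [SemilatticeSup α] (σ : ι ≃ ι)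
    (p : ι → Prop) [DecidablePred p] (f : ι → α) (h : ({i | p (σ i)} : Finset ι).Nonempty)
    (h' : ({i | p i} : Finset ι).Nonempty) :
    ({i | p (σ i)} : Finset ι).sup' h (f ∘ σ) = ({i | p i} : Finset ι).sup' h' f := by
  have : ({i | p i} : Finset ι) = ({i | p (σ i)} : Finset ι).map σ.toEmbedding := by
    ext i
    simp
  rw [sup'_congr h' this fun _ _ => rfl, sup'_map]
  rfl

theorem inf'_filter_comp_equiv {ι α : Type*} [Fintype ι] [SemilatticeInf α] (σ : ι ≃ ι)
    (p : ι → Prop) [DecidablePred p] (f : ι → α) (h : ({i | p (σ i)} : Finset ι).Nonempty)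
    (h' : ({i | p i} : Finset ι).Nonempty) :
    ({i | p (σ i)} : Finset ι).inf' h (f ∘ σ) = ({i | p i} : Finset ι).inf' h' f :=
  sup'_filter_comp_equiv (α := αᵒᵈ) σ p f h h'

theorem measurable_sup'_filter {δ ι α : Type*} [MeasurableSpace δ] [Fintype ι]
    [SemilatticeSup α] [MeasurableSpace α] [MeasurableSup₂ α]
    {p : δ → ι → Prop} [∀ x, DecidablePred (p x)] {f : ι → δ → α} {j : ι} (hj : ∀ x, p x j)
    (hp : ∀ i, MeasurableSet {x | p x i}) (hf : ∀ i, Measurable (f i)) :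
    Measurable fun x => ({i | p x i} : Finset ι).sup' ⟨j, by simpa using hj x⟩ fun i => f i x := by
  have hne : (univ : Finset ι).Nonempty := ⟨j, mem_univ j⟩
  have h : ∀ x, ({i | p x i} : Finset ι).sup' ⟨j, by simpa using hj x⟩ (fun i => f i x) =
      univ.sup' hne fun i => if p x i then f i x else f j x := fun x => by
    refine le_antisymm (sup'_le _ _ fun i hi => ?_) (sup'_le _ _ fun i _ => ?_)
    · exact le_sup'_of_le _ (mem_univ i) (by simp [(mem_filter.1 hi).2])
    · split_ifs with hi
      · exact le_sup'_of_le _ (by simpa using hi) le_rfl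
      · exact le_sup'_of_le _ (by simpa using hj x) le_rfl
  simp_rw [h]
  convert Finset.measurable_sup' hne
    (f := fun i x => if p x i then f i x else f j x)
    (fun i _ => Measurable.ite (hp i) (hf i) (hf j)) using 1
  funext x
  rw [Finset.sup'_apply]

theorem measurable_inf'_filter {δ ι α : Type*} [MeasurableSpace δ] [Fintype ι]
    [SemilatticeInf α] [MeasurableSpace α] [MeasurableInf₂ α]
    {p : δ → ι → Prop} [∀ x, DecidablePred (p x)] {f : ι → δ → α} {j : ι} (hj : ∀ x, p x j)
    (hp : ∀ i, MeasurableSet {x | p x i}) (hf : ∀ i, Measurable (f i)) :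
    Measurable fun x => ({i | p x i} : Finset ι).inf' ⟨j, by simpa using hj x⟩ fun i => f i x :=
  measurable_sup'_filter (α := αᵒᵈ) hj hp hf

section IsotonicRegression

variable {n : ℕ}

def scoreBlock (s : Fin n → ℝ) (a b : Fin n) : Finset (Fin n) :=
  {i | s a ≤ s i ∧ s i ≤ s b}

def blockAvg (s y : Fin n → ℝ) (a b : Fin n) : ℝ :=
  (∑ i ∈ scoreBlock s a b, y i) / #(scoreBlock s a b)

/-- For an upper set `U` of scores, the isotonic regression of the data indexed by `U`. -/
def isoValOn (s y : Fin n → ℝ) (U : Finset (Fin n)) (j : Fin n) : ℝ :=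
  if h : {a ∈ U | s a ≤ s j}.Nonempty then
    {a ∈ U | s a ≤ s j}.sup' h fun a =>
      ({b | s j ≤ s b} : Finset (Fin n)).inf' ⟨j, by simp⟩ (blockAvg s y a)
  else 0

theorem mem_scoreBlock {s : Fin n → ℝ} {a b i : Fin n} :
    i ∈ scoreBlock s a b ↔ s a ≤ s i ∧ s i ≤ s b := by
  simp [scoreBlock]

theorem card_scoreBlock_pos {s : Fin n → ℝ} {a b : Fin n} (h : s a ≤ s b) :
    (0 : ℝ) < #(scoreBlock s a b) := by
  exact_mod_cast card_pos.2 ⟨a, mem_scoreBlock.2 ⟨le_rfl, h⟩⟩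

theorem blockAvg_le_iff {s y : Fin n → ℝ} {a b : Fin n} {M : ℝ} (h : s a ≤ s b) :
    blockAvg s y a b ≤ M ↔ ∑ i ∈ scoreBlock s a b, (y i - M) ≤ 0 := by
  rw [blockAvg, div_le_iff₀ (card_scoreBlock_pos h), sum_sub_distrib, sum_const, nsmul_eq_mul,
    sub_nonpos, mul_comm]

theorem le_blockAvg_iff {s y : Fin n → ℝ} {a b : Fin n} {M : ℝ} (h : s a ≤ s b) :
    M ≤ blockAvg s y a b ↔ 0 ≤ ∑ i ∈ scoreBlock s a b, (y i - M) := by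
  rw [blockAvg, le_div_iff₀ (card_scoreBlock_pos h), sum_sub_distrib, sum_const, nsmul_eq_mul,
    sub_nonneg, mul_comm]

theorem sum_sub_blockAvg_self {s y : Fin n → ℝ} {a b : Fin n} (h : s a ≤ s b) :
    ∑ i ∈ scoreBlock s a b, (y i - blockAvg s y a b) = 0 :=
  le_antisymm ((blockAvg_le_iff h).1 le_rfl) ((le_blockAvg_iff h).1 le_rfl)

theorem sum_scoreBlock_eq_add {M : Type*} [AddCommMonoid M] (f : Fin n → M) {s : Fin n → ℝ}
    {a c a' b : Fin n} (hac : s a ≤ s c) (ha' : s c < s a')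
    (ha'min : ∀ i, s c < s i → s a' ≤ s i) (hb : s a' ≤ s b) :
    ∑ i ∈ scoreBlock s a b, f i = ∑ i ∈ scoreBlock s a c, f i + ∑ i ∈ scoreBlock s a' b, f i := by
  rw [← sum_filter_add_sum_filter_not (scoreBlock s a b) (fun i => s i ≤ s c)]
  congr 2 <;> ext i <;> simp only [mem_filter, mem_scoreBlock] <;> grind

theorem isoVal_one_eq (s y : Fin n → ℝ) (j : Fin n) :
    isoVal s (fun _ => 1) y j = ({a | s a ≤ s j} : Finset (Fin n)).sup' ⟨j, by simp⟩ fun a =>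
      ({b | s j ≤ s b} : Finset (Fin n)).inf' ⟨j, by simp⟩ (blockAvg s y a) := by
  refine sup'_congr _ rfl fun a _ => inf'_congr _ rfl fun b _ => ?_
  simp [blockAvg, scoreBlock]

theorem isoVal_one_eq_isoValOn_univ (s y : Fin n → ℝ) (j : Fin n) :
    isoVal s (fun _ => 1) y j = isoValOn s y univ j := by
  rw [isoValOn, dif_pos ⟨j, by simp⟩, isoVal_one_eq]

section FirstBlock

variable {s y : Fin n → ℝ} {U : Finset (Fin n)} {a₀ b₀ : Fin n}

theorem sum_sub_blockAvg_nonneg_of_lt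
    (hmin : ∀ b, s a₀ ≤ s b → blockAvg s y a₀ b₀ ≤ blockAvg s y a₀ b) (t : ℝ) :
    0 ≤ ∑ i ∈ ({i | s a₀ ≤ s i ∧ s i < t} : Finset (Fin n)), (y i - blockAvg s y a₀ b₀) := by
  rcases eq_empty_or_nonempty ({i | s a₀ ≤ s i ∧ s i < t} : Finset (Fin n)) with h | h
  · simp [h]
  obtain ⟨b, hb, hbmax⟩ := exists_max_image _ s h
  have hab : s a₀ ≤ s b := (mem_filter.1 hb).2.1
  have : ({i | s a₀ ≤ s i ∧ s i < t} : Finset (Fin n)) = scoreBlock s a₀ b := by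
    ext i
    simp only [mem_filter, mem_univ, true_and, mem_scoreBlock] at hb hbmax ⊢
    exact ⟨fun hi => ⟨hi.1, hbmax i hi⟩, fun hi => ⟨hi.1, hi.2.trans_lt hb.2⟩⟩
  rw [this, ← le_blockAvg_iff hab]
  exact hmin b hab

theorem blockAvg_le_blockAvg_of_suffix
    (hmin : ∀ b, s a₀ ≤ s b → blockAvg s y a₀ b₀ ≤ blockAvg s y a₀ b)
    {a : Fin n} (ha₀ : s a₀ ≤ s a) (hab₀ : s a ≤ s b₀) :
    blockAvg s y a b₀ ≤ blockAvg s y a₀ b₀ := by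
  have hsplit := sum_filter_add_sum_filter_not (scoreBlock s a₀ b₀) (fun i => s i < s a)
    (fun i => y i - blockAvg s y a₀ b₀)
  have hlow : {i ∈ scoreBlock s a₀ b₀ | s i < s a} =
      ({i | s a₀ ≤ s i ∧ s i < s a} : Finset (Fin n)) := by
    ext i
    simp only [mem_filter, mem_univ, true_and, mem_scoreBlock]
    grind
  have hhigh : {i ∈ scoreBlock s a₀ b₀ | ¬ s i < s a} = scoreBlock s a b₀ := by
    ext i
    simp only [mem_filter, mem_scoreBlock]
    grind
  rw [hlow, hhigh, sum_sub_blockAvg_self (ha₀.trans hab₀)] at hsplit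
  rw [blockAvg_le_iff hab₀]
  linarith [sum_sub_blockAvg_nonneg_of_lt hmin (s a)]

theorem blockAvg_le_blockAvg_of_next (hb₀ : s a₀ ≤ s b₀)
    (hmin : ∀ b, s a₀ ≤ s b → blockAvg s y a₀ b₀ ≤ blockAvg s y a₀ b)
    {a' b : Fin n} (ha' : s b₀ < s a') (ha'min : ∀ i, s b₀ < s i → s a' ≤ s i)
    (hb : s a' ≤ s b) : blockAvg s y a₀ b₀ ≤ blockAvg s y a' b := by
  have hab : s a₀ ≤ s b := by linarith
  have hsplit := sum_scoreBlock_eq_add (fun i => y i - blockAvg s y a₀ b₀) hb₀ ha' ha'min hb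
  rw [sum_sub_blockAvg_self hb₀, zero_add] at hsplit
  rw [le_blockAvg_iff hb, ← hsplit, ← le_blockAvg_iff hab]
  exact hmin b hab

theorem blockAvg_le_blockAvg_of_lt
    (hmin : ∀ b, s a₀ ≤ s b → blockAvg s y a₀ b₀ ≤ blockAvg s y a₀ b)
    {a a' b : Fin n} (ha₀ : s a₀ ≤ s a) (hab₀ : s a ≤ s b₀)
    (ha' : s b₀ < s a') (ha'min : ∀ i, s b₀ < s i → s a' ≤ s i) (hb : s a' ≤ s b) :
    blockAvg s y a b ≤ blockAvg s y a' b := by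
  have hleft : blockAvg s y a b₀ ≤ blockAvg s y a' b :=
    (blockAvg_le_blockAvg_of_suffix hmin ha₀ hab₀).trans
      (blockAvg_le_blockAvg_of_next (ha₀.trans hab₀) hmin ha' ha'min hb)
  have hsplit := sum_scoreBlock_eq_add (fun i => y i - blockAvg s y a' b) hab₀ ha' ha'min hb
  rw [sum_sub_blockAvg_self hb, add_zero] at hsplit
  rw [blockAvg_le_iff (by linarith), hsplit, ← blockAvg_le_iff hab₀]
  exact hleft

theorem isoValOn_eq_blockAvg (hU : ∀ i, i ∈ U ↔ s a₀ ≤ s i)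
    (hmin : ∀ b, s a₀ ≤ s b → blockAvg s y a₀ b₀ ≤ blockAvg s y a₀ b)
    {j : Fin n} (hj : j ∈ scoreBlock s a₀ b₀) :
    isoValOn s y U j = blockAvg s y a₀ b₀ := by
  obtain ⟨ha₀j, hjb₀⟩ := mem_scoreBlock.1 hj
  have ha₀ : a₀ ∈ {a ∈ U | s a ≤ s j} := mem_filter.2 ⟨(hU a₀).2 le_rfl, ha₀j⟩
  rw [isoValOn, dif_pos ⟨a₀, ha₀⟩]
  apply le_antisymm
  · refine sup'_le _ _ fun a ha => ?_
    obtain ⟨haU, haj⟩ := mem_filter.1 ha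
    exact (inf'_le _ (by simpa using hjb₀)).trans
      (blockAvg_le_blockAvg_of_suffix hmin ((hU a).1 haU) (haj.trans hjb₀))
  · refine le_sup'_of_le _ ha₀ (le_inf' _ _ fun b hb => hmin b ?_)
    exact ha₀j.trans (by simpa using hb)

theorem isoValOn_eq_isoValOn_of_lt (hU : ∀ i, i ∈ U ↔ s a₀ ≤ s i) (hb₀ : s a₀ ≤ s b₀)
    (hmin : ∀ b, s a₀ ≤ s b → blockAvg s y a₀ b₀ ≤ blockAvg s y a₀ b)
    {j : Fin n} (hj : s b₀ < s j) :
    isoValOn s y U j = isoValOn s y {i | s b₀ < s i} j := by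
  set U' : Finset (Fin n) := {i | s b₀ < s i}
  obtain ⟨a', ha', ha'min⟩ := exists_min_image U' s ⟨j, by simpa [U'] using hj⟩
  simp only [U', mem_filter, mem_univ, true_and] at ha' ha'min
  have hsub : {a ∈ U' | s a ≤ s j} ⊆ {a ∈ U | s a ≤ s j} := by
    intro a
    simp only [U', mem_filter, mem_univ, true_and, hU]
    exact fun h => ⟨hb₀.trans h.1.le, h.2⟩
  have ha'j : a' ∈ {a ∈ U' | s a ≤ s j} := by simpa [U'] using And.intro ha' (ha'min j hj)
  rw [isoValOn, isoValOn, dif_pos ⟨a', hsub ha'j⟩, dif_pos ⟨a', ha'j⟩]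
  refine le_antisymm (sup'_le _ _ fun a ha => ?_) (sup'_mono _ hsub _)
  obtain ⟨haU, haj⟩ := mem_filter.1 ha
  rcases le_or_gt (s a) (s b₀) with hab₀ | hb₀a
  · refine le_sup'_of_le _ ha'j (le_inf' _ _ fun b hb => inf'_le_of_le _ hb ?_)
    have hjb : s j ≤ s b := by simpa using hb
    exact blockAvg_le_blockAvg_of_lt hmin ((hU a).1 haU) hab₀ ha' ha'min
      ((ha'min j hj).trans hjb)
  · exact le_sup'_of_le _ (by simpa [U'] using And.intro hb₀a haj) le_rfl

end FirstBlock

theorem sum_sub_isoValOn_mul_eq_zero (s y : Fin n → ℝ) (φ : ℝ → ℝ) (U : Finset (Fin n))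
    (hU : ∀ i ∈ U, ∀ j, s i ≤ s j → j ∈ U) :
    ∑ j ∈ U, (y j - isoValOn s y U j) * φ (isoValOn s y U j) = 0 := by
  induction U using Finset.strongInduction with
  | H U ih =>
  rcases U.eq_empty_or_nonempty with rfl | hne
  · simp
  obtain ⟨a₀, ha₀U, ha₀min⟩ := exists_min_image U s hne
  have hU₀ : ∀ i, i ∈ U ↔ s a₀ ≤ s i := fun i => ⟨ha₀min i, hU a₀ ha₀U i⟩
  obtain ⟨b₀, hb₀, hmin⟩ := exists_min_image ({b | s a₀ ≤ s b} : Finset (Fin n))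
    (blockAvg s y a₀) ⟨a₀, by simp⟩
  simp only [mem_filter, mem_univ, true_and] at hb₀ hmin
  set U' : Finset (Fin n) := {i | s b₀ < s i}
  have hfirst : {i ∈ U | s i ≤ s b₀} = scoreBlock s a₀ b₀ := by
    ext i
    simp only [mem_filter, mem_scoreBlock, hU₀]
  have hrest : {i ∈ U | ¬ s i ≤ s b₀} = U' := by
    ext i
    simp only [U', mem_filter, mem_univ, true_and, hU₀, not_le]
    exact ⟨fun h => h.2, fun h => ⟨hb₀.trans h.le, h⟩⟩
  have hU'U : U' ⊂ U := by
    rw [← hrest]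
    exact filter_ssubset.2 ⟨b₀, (hU₀ b₀).2 hb₀, by simp⟩
  have hU'upper : ∀ i ∈ U', ∀ j, s i ≤ s j → j ∈ U' := fun i hi j hij => by
    simp only [U', mem_filter, mem_univ, true_and] at hi ⊢
    exact hi.trans_le hij
  rw [← sum_filter_add_sum_filter_not U (fun i => s i ≤ s b₀), hfirst, hrest]
  calc ∑ j ∈ scoreBlock s a₀ b₀, (y j - isoValOn s y U j) * φ (isoValOn s y U j)
        + ∑ j ∈ U', (y j - isoValOn s y U j) * φ (isoValOn s y U j)
      = (∑ j ∈ scoreBlock s a₀ b₀, (y j - blockAvg s y a₀ b₀)) * φ (blockAvg s y a₀ b₀)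
        + ∑ j ∈ U', (y j - isoValOn s y U' j) * φ (isoValOn s y U' j) := by
        rw [sum_mul]
        congr 1 <;> refine sum_congr rfl fun j hj => ?_
        · rw [isoValOn_eq_blockAvg hU₀ hmin hj]
        · rw [isoValOn_eq_isoValOn_of_lt hU₀ hb₀ hmin (by simpa [U'] using hj)]
    _ = 0 := by rw [sum_sub_blockAvg_self hb₀, ih U' hU'U hU'upper, zero_mul, add_zero]

theorem sum_sub_isoVal_mul_eq_zero (s y : Fin n → ℝ) (φ : ℝ → ℝ) :
    ∑ j, (y j - isoVal s (fun _ => 1) y j) * φ (isoVal s (fun _ => 1) y j) = 0 := by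
  simp only [isoVal_one_eq_isoValOn_univ]
  exact sum_sub_isoValOn_mul_eq_zero s y φ univ fun _ _ j _ => mem_univ j

theorem measurable_blockAvg {α : Type*} [MeasurableSpace α] {S Y : α → Fin n → ℝ}
    (hS : Measurable S) (hY : Measurable Y) (a b : Fin n) :
    Measurable fun x => blockAvg (S x) (Y x) a b := by
  simp only [blockAvg, scoreBlock, sum_filter, card_filter, Nat.cast_sum, Nat.cast_ite,
    Nat.cast_one, Nat.cast_zero]
  have hle : ∀ a b, MeasurableSet {x | S x a ≤ S x b} := fun a b =>
    measurableSet_le (by fun_prop) (by fun_prop)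
  refine Measurable.div (Finset.measurable_sum _ fun i _ => ?_) ?_
  · exact Measurable.ite ((hle a i).inter (hle i b)) (by fun_prop) measurable_const
  · exact Finset.measurable_sum _ fun i _ =>
      Measurable.ite ((hle a i).inter (hle i b)) measurable_const measurable_const

theorem measurable_isoVal {α : Type*} [MeasurableSpace α] {S Y : α → Fin n → ℝ}
    (hS : Measurable S) (hY : Measurable Y) (j : Fin n) :
    Measurable fun x => isoVal (S x) (fun _ => 1) (Y x) j := by
  have hle : ∀ a b, MeasurableSet {x | S x a ≤ S x b} := fun a b =>
    measurableSet_le (by fun_prop) (by fun_prop)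
  simp only [isoVal_one_eq]
  refine measurable_sup'_filter (p := fun x a => S x a ≤ S x j) (fun _ => le_rfl)
    (fun a => hle a j) fun a => ?_
  exact measurable_inf'_filter (p := fun x b => S x j ≤ S x b) (fun _ => le_rfl) (hle j)
    (measurable_blockAvg hS hY a)

theorem blockAvg_mem_Icc {s y : Fin n → ℝ} {c d : ℝ} (hy : ∀ i, y i ∈ Set.Icc c d)
    {a b : Fin n} (hab : s a ≤ s b) : blockAvg s y a b ∈ Set.Icc c d :=
  ⟨(le_blockAvg_iff hab).2 (sum_nonneg fun i _ => sub_nonneg.2 (hy i).1),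
    (blockAvg_le_iff hab).2 (sum_nonpos fun i _ => sub_nonpos.2 (hy i).2)⟩

theorem isoVal_mem_Icc (s : Fin n → ℝ) {y : Fin n → ℝ} {c d : ℝ} (hy : ∀ i, y i ∈ Set.Icc c d)
    (j : Fin n) : isoVal s (fun _ => 1) y j ∈ Set.Icc c d := by
  rw [isoVal_one_eq]
  constructor
  · refine le_sup'_of_le (b := j) _ (by simp) (le_inf' _ _ fun b hb => ?_)
    exact (blockAvg_mem_Icc hy (by simpa using hb)).1
  · refine sup'_le _ _ fun a ha => inf'_le_of_le (b := j) _ (by simp) ?_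
    exact (blockAvg_mem_Icc hy (by simpa using ha)).2

theorem isoVal_comp_perm (s w y : Fin n → ℝ) (σ : Equiv.Perm (Fin n)) (j : Fin n) :
    isoVal (s ∘ σ) (w ∘ σ) (y ∘ σ) j = isoVal s w y (σ j) := by
  have hsum : ∀ (p : Fin n → Prop) [DecidablePred p] (f : Fin n → ℝ),
      ∑ i ∈ ({i | p (σ i)} : Finset (Fin n)), f (σ i) = ∑ i ∈ ({i | p i} : Finset (Fin n)), f i :=
    fun p _ f => by simp only [sum_filter]; exact Equiv.sum_comp σ fun i => if p i then f i else 0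
  unfold isoVal
  refine (sup'_congr _ rfl fun a _ => ?_).trans
    (sup'_filter_comp_equiv σ (fun a => s a ≤ s (σ j)) _ _ ⟨σ j, by simp⟩)
  refine (inf'_congr _ rfl fun b _ => ?_).trans
    (inf'_filter_comp_equiv σ (fun b => s (σ j) ≤ s b) _ _ ⟨σ j, by simp⟩)
  have hblock := hsum fun i => s (σ a) ≤ s i ∧ s i ≤ s (σ b)
  exact congr_arg₂ (· / ·) (hblock fun i => w i * y i) (hblock w)

end IsotonicRegression

theorem map_comp_perm_eq_of_iIndepFun {Ω ι β : Type*} [MeasurableSpace Ω] [MeasurableSpace β]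
    [Fintype ι] {μ : Measure Ω} {Z : ι → Ω → β} (hZ : ∀ i, Measurable (Z i))
    (hindep : iIndepFun Z μ) (hident : ∀ i j, IdentDistrib (Z i) (Z j) μ μ)
    (σ : Equiv.Perm ι) :
    (μ.map fun ω i => Z i ω).map (fun z => z ∘ σ) = μ.map fun ω i => Z i ω := by
  have := hindep.isProbabilityMeasure
  rw [hindep.map_fun_eq_pi_map fun i => (hZ i).aemeasurable]
  have hσ : (fun z : ι → β => z ∘ σ) = MeasurableEquiv.piCongrLeft (fun _ => β) σ.symm := by
    ext z i
    simp [MeasurableEquiv.piCongrLeft, Equiv.piCongrLeft]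
  conv_lhs => rw [show (fun i => μ.map (Z i)) = fun i => μ.map (Z (σ.symm i)) from
    funext fun i => (hident _ _).map_eq.symm]
  rw [hσ]
  exact (measurePreserving_piCongrLeft (fun i => μ.map (Z i)) σ.symm).map_eq

theorem integral_eq_zero_of_sum_eq_zero {β κ : Type*} [MeasurableSpace β] [Fintype κ]
    {P : Measure β} (τ : κ → β → β) (hτ : ∀ i, Measurable (τ i)) (hPτ : ∀ i, P.map (τ i) = P)
    {F : β → κ → ℝ} {j : κ} (hF : Integrable (fun z => F z j) P)
    (hFτ : ∀ z i, F (τ i z) j = F z i) (hsum : ∀ z, ∑ i, F z i = 0) :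
    ∫ z, F z j ∂P = 0 := by
  have hFi : ∀ i, Integrable (fun z => F z i) P := fun i => by
    simp_rw [← hFτ _ i]
    exact (hPτ i ▸ hF).comp_measurable (hτ i)
  have hint : ∀ i, ∫ z, F z i ∂P = ∫ z, F z j ∂P := fun i => by
    simp_rw [← hFτ _ i]
    have := integral_map (hτ i).aemeasurable ((hPτ i).symm ▸ hF.aestronglyMeasurable)
    rwa [hPτ i, eq_comm] at this
  have hcard : (Fintype.card κ : ℝ) ≠ 0 := Nat.cast_ne_zero.2 (Fintype.card_pos_iff.2 ⟨j⟩).ne'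
  have := integral_finsetSum univ fun i _ => hFi i
  simp only [hsum, integral_zero, hint, sum_const, card_univ, nsmul_eq_mul] at this
  exact (mul_eq_zero.1 this.symm).resolve_left hcard

theorem condExp_comap_ae_eq_of_integral_mul_eq_zero {Ω : Type*} [MeasurableSpace Ω]
    {μ : Measure Ω} [IsFiniteMeasure μ] {Y g : Ω → ℝ} (hY : Integrable Y μ) (hg : Measurable g)
    (hgi : Integrable g μ)
    (h : ∀ φ : ℝ → ℝ, Measurable φ → (∀ r, |φ r| ≤ 1) → ∫ ω, (Y ω - g ω) * φ (g ω) ∂μ = 0) :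
    μ[Y | MeasurableSpace.comap g inferInstance] =ᵐ[μ] g := by
  refine (ae_eq_condExp_of_forall_setIntegral_eq hg.comap_le hY
    (fun _ _ _ => hgi.integrableOn) ?_ ?_).symm
  · rintro _ ⟨B, hB, rfl⟩ _
    have hind : ∀ ω, (Y ω - g ω) * B.indicator 1 (g ω) =
        (g ⁻¹' B).indicator Y ω - (g ⁻¹' B).indicator g ω := fun ω => by
      by_cases hω : g ω ∈ B <;> simp [hω]
    have := h (B.indicator 1) (measurable_const.indicator hB) fun r => by
      by_cases hr : r ∈ B <;> simp [hr]
    simp_rw [hind] at this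
    rw [integral_sub (hY.indicator (hg hB)) (hgi.indicator (hg hB)), integral_indicator (hg hB),
      integral_indicator (hg hB), sub_eq_zero] at this
    exact this.symm
  · exact (Measurable.of_comap_le le_rfl).stronglyMeasurable.aestronglyMeasurable

section IVAP

variable {𝓧 : Type*} {m k : ℕ}

-- Positions of the `k` calibration objects followed by the test object in a sample of size
-- `m + k + 1` whose first `m` objects form the proper training set.
def calibIdx (m : ℕ) {k : ℕ} (j : Fin (k + 1)) : Fin (m + k + 1) := ⟨m + j, by omega⟩

def ivapScores (A : (Fin m → 𝓧 × ℝ) → 𝓧 → ℝ) (z : Fin (m + k + 1) → 𝓧 × ℝ)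
    (j : Fin (k + 1)) : ℝ :=
  A (fun i => z ⟨i, by omega⟩) (z (calibIdx m j)).1

def ivapLabels (m : ℕ) (z : Fin (m + k + 1) → 𝓧 × ℝ) (j : Fin (k + 1)) : ℝ :=
  (z (calibIdx m j)).2

def ivapFit (A : (Fin m → 𝓧 × ℝ) → 𝓧 → ℝ) (z : Fin (m + k + 1) → 𝓧 × ℝ)
    (j : Fin (k + 1)) : ℝ :=
  isoVal (ivapScores A z) (fun _ => 1) (ivapLabels m z) j

theorem ivapPred_eq_ivapFit (A : (Fin m → 𝓧 × ℝ) → 𝓧 → ℝ) (z : Fin (m + k + 1) → 𝓧 × ℝ) :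
    ivapPred A (fun i => z ⟨i, by omega⟩) (fun i : Fin k => z ⟨m + i, by omega⟩)
      (z (Fin.last (m + k))).1 (z (Fin.last (m + k))).2 = ivapFit A z (Fin.last k) := by
  unfold ivapPred ivapFit
  congr 1 <;> funext j <;> refine Fin.lastCases ?_ (fun i => ?_) j <;>
    simp only [Fin.snoc_last, Fin.snoc_castSucc] <;> rfl

theorem calibIdx_injective : Function.Injective (calibIdx m (k := k)) := fun i j h =>
  Fin.ext (by simpa [calibIdx] using h)

theorem ivapFit_comp_swap (A : (Fin m → 𝓧 × ℝ) → 𝓧 → ℝ) (z : Fin (m + k + 1) → 𝓧 × ℝ)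
    (i j l : Fin (k + 1)) :
    ivapFit A (z ∘ Equiv.swap (calibIdx m i) (calibIdx m j)) l =
      ivapFit A z (Equiv.swap i j l) := by
  set σ := Equiv.swap (calibIdx m i) (calibIdx m j)
  have htrain : ∀ t : Fin m, σ ⟨t, by omega⟩ = ⟨t, by omega⟩ := fun t =>
    Equiv.swap_apply_of_ne_of_ne (by simp [calibIdx, Fin.ext_iff]; omega)
      (by simp [calibIdx, Fin.ext_iff]; omega)
  have hcalib : ∀ l, σ (calibIdx m l) = calibIdx m (Equiv.swap i j l) :=
    calibIdx_injective.swap_apply i j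
  have hs : ivapScores A (z ∘ σ) = ivapScores A z ∘ Equiv.swap i j := by
    funext l
    simp only [ivapScores, Function.comp_apply, htrain, hcalib]
  have hy : ivapLabels m (z ∘ σ) = ivapLabels m z ∘ Equiv.swap i j := by
    funext l
    simp only [ivapLabels, Function.comp_apply, hcalib]
  rw [ivapFit, hs, hy]
  exact isoVal_comp_perm _ (fun _ => 1) _ _ l

theorem measurable_ivapLabels [MeasurableSpace 𝓧] (j : Fin (k + 1)) :
    Measurable fun z : Fin (m + k + 1) → 𝓧 × ℝ => ivapLabels m z j :=
  (measurable_pi_apply _).snd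

theorem measurable_ivapFit [MeasurableSpace 𝓧] {A : (Fin m → 𝓧 × ℝ) → 𝓧 → ℝ}
    (hA : Measurable fun p : (Fin m → 𝓧 × ℝ) × 𝓧 => A p.1 p.2) (j : Fin (k + 1)) :
    Measurable fun z : Fin (m + k + 1) → 𝓧 × ℝ => ivapFit A z j := by
  have htrain : Measurable fun z : Fin (m + k + 1) → 𝓧 × ℝ => fun i : Fin m => z ⟨i, by omega⟩ :=
    by fun_prop
  have hS : Measurable (ivapScores (k := k) A) := measurable_pi_lambda _ fun l =>
    hA.comp (htrain.prodMk (measurable_pi_apply _).fst)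
  exact measurable_isoVal hS (measurable_pi_lambda _ measurable_ivapLabels) j

theorem integral_sub_ivapFit_mul_eq_zero {Ω : Type*} [MeasurableSpace Ω] [MeasurableSpace 𝓧]
    {μ : Measure Ω} {Z : Fin (m + k + 1) → Ω → 𝓧 × ℝ} (hZ : ∀ i, Measurable (Z i))
    (hindep : iIndepFun Z μ) (hident : ∀ i j, IdentDistrib (Z i) (Z j) μ μ)
    (hlab : ∀ i ω, (Z i ω).2 ∈ Set.Icc 0 1) {A : (Fin m → 𝓧 × ℝ) → 𝓧 → ℝ}
    (hA : Measurable fun p : (Fin m → 𝓧 × ℝ) × 𝓧 => A p.1 p.2) {φ : ℝ → ℝ}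
    (hφ : Measurable φ) (hφb : ∀ r, |φ r| ≤ 1) :
    ∫ ω, (ivapLabels m (fun i => Z i ω) (Fin.last k) - ivapFit A (fun i => Z i ω) (Fin.last k)) *
      φ (ivapFit A (fun i => Z i ω) (Fin.last k)) ∂μ = 0 := by
  have := hindep.isProbabilityMeasure
  set F : (Fin (m + k + 1) → 𝓧 × ℝ) → Fin (k + 1) → ℝ :=
    fun z j => (ivapLabels m z j - ivapFit A z j) * φ (ivapFit A z j)
  have hF : ∀ j, Measurable fun z => F z j := fun j =>
    ((measurable_ivapLabels j).sub (measurable_ivapFit hA j)).mul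
      (hφ.comp (measurable_ivapFit hA j))
  have hvec : Measurable fun ω i => Z i ω := measurable_pi_lambda _ hZ
  have hFb : ∀ ω, |F (fun i => Z i ω) (Fin.last k)| ≤ 1 := fun ω => by
    have hy : ivapLabels m (fun i => Z i ω) (Fin.last k) ∈ Set.Icc 0 1 := hlab _ ω
    have hf : ivapFit A (fun i => Z i ω) (Fin.last k) ∈ Set.Icc 0 1 :=
      isoVal_mem_Icc _ (fun l => hlab (calibIdx m l) ω) _
    rw [abs_mul]
    exact mul_le_one₀ (abs_sub_le_of_nonneg_of_le hy.1 hy.2 hf.1 hf.2) (abs_nonneg _) (hφb _)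
  rw [← integral_map hvec.aemeasurable (hF _).aestronglyMeasurable]
  refine integral_eq_zero_of_sum_eq_zero
    (fun j z => z ∘ Equiv.swap (calibIdx m j) (calibIdx m (Fin.last k)))
    (fun j => by fun_prop) (fun j => map_comp_perm_eq_of_iIndepFun hZ hindep hident _) ?_
    (fun z j => ?_) (fun z => sum_sub_isoVal_mul_eq_zero _ _ φ)
  · exact (integrable_map_measure (hF _).aestronglyMeasurable hvec.aemeasurable).2
      (Integrable.of_bound ((hF _).comp hvec).aestronglyMeasurable 1 (ae_of_all _ hFb))
  · have hy : ivapLabels m (z ∘ Equiv.swap (calibIdx m j) (calibIdx m (Fin.last k))) (Fin.last k)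
        = ivapLabels m z j := by
      simp [ivapLabels]
    simp only [F, ivapFit_comp_swap, hy, Equiv.swap_apply_right]

end IVAP

end

/-- Validity (perfect calibration) of IVAPs: for i.i.d. observations there is
a selector `S` (indeed `S = Y`) such that `E(Y ∣ P_S) = P_S` a.s., where
`(P₀, P₁)` is the IVAP multiprobability prediction for the test object. -/
theorem stmt_16 {Ω : Type*} [MeasurableSpace Ω] (μ : Measure Ω)
    [IsProbabilityMeasure μ]
    {𝓧 : Type*} [MeasurableSpace 𝓧]
    (l m k : ℕ) (hl : l = m + k)
    (Z : Fin (l + 1) → Ω → 𝓧 × ℝ)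
    (hmeas : ∀ i, Measurable (Z i))
    (hindep : iIndepFun Z μ)
    (hident : ∀ i j, IdentDistrib (Z i) (Z j) μ μ)
    (hbin : ∀ i ω, (Z i ω).2 = 0 ∨ (Z i ω).2 = 1)
    (A : (Fin m → 𝓧 × ℝ) → 𝓧 → ℝ)
    (hA : Measurable fun p : (Fin m → 𝓧 × ℝ) × 𝓧 => A p.1 p.2)
    (Y : Ω → ℝ) (hYdef : ∀ ω, Y ω = (Z (Fin.last l) ω).2)
    (P0 P1 : Ω → ℝ)
    (hP0 : ∀ ω, P0 ω = ivapPred A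
      (fun i => Z ⟨i, by omega⟩ ω)
      (fun i : Fin k => Z ⟨m + i, by omega⟩ ω)
      (Z (Fin.last l) ω).1 0)
    (hP1 : ∀ ω, P1 ω = ivapPred A
      (fun i => Z ⟨i, by omega⟩ ω)
      (fun i : Fin k => Z ⟨m + i, by omega⟩ ω)
      (Z (Fin.last l) ω).1 1) :
    ∃ S : Ω → ℝ, (∀ ω, S ω = 0 ∨ S ω = 1) ∧ (∀ ω, S ω = Y ω) ∧
      μ[Y | MeasurableSpace.comap
          (fun ω => if S ω = 1 then P1 ω else P0 ω) Real.measurableSpace]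
        =ᵐ[μ] fun ω => if S ω = 1 then P1 ω else P0 ω := by
  subst hl
  set g : Ω → ℝ := fun ω => ivapFit A (fun i => Z i ω) (Fin.last k)
  have hlab : ∀ i ω, (Z i ω).2 ∈ Set.Icc 0 1 := fun i ω => by
    rcases hbin i ω with h | h <;> simp [h]
  have hselect : (fun ω => if Y ω = 1 then P1 ω else P0 ω) = g := funext fun ω => by
    rw [hP0, hP1, hYdef, show g ω = _ from (ivapPred_eq_ivapFit A fun i => Z i ω).symm]
    rcases hbin (Fin.last (m + k)) ω with h | h <;> simp [h]
  have hY : Y = fun ω => (Z (Fin.last (m + k)) ω).2 := funext hYdef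
  have hg : Measurable g := (measurable_ivapFit hA _).comp (measurable_pi_lambda _ hmeas)
  refine ⟨Y, fun ω => hYdef ω ▸ hbin _ ω, fun _ => rfl, ?_⟩
  rw [hselect]
  refine condExp_comap_ae_eq_of_integral_mul_eq_zero ?_ hg ?_ fun φ hφ hφb => ?_
  · rw [hY]
    exact Integrable.of_bound (hmeas _).snd.aestronglyMeasurable 1 (ae_of_all _ fun ω =>
      (Real.norm_of_nonneg (hlab _ ω).1).trans_le (hlab _ ω).2)
  · refine Integrable.of_bound hg.aestronglyMeasurable 1 (ae_of_all _ fun ω => ?_)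
    have hgω : g ω ∈ Set.Icc 0 1 := isoVal_mem_Icc _ (fun l => hlab (calibIdx m l) ω) _
    exact (Real.norm_of_nonneg hgω.1).trans_le hgω.2
  · rw [hY]
    exact integral_sub_ivapFit_mul_eq_zero hmeas hindep hident hlab hA hφ hφb
end

section
/- For an IVAP, the multiprobability outputs always satisfy p_0 < p_1: fitting isotonic regression after appending (s,1) yields a strictly larger fitted value at s than after appending (s,0). -/
theorem Finset.sup'_inf'_lt_sup'_inf' {α β γ : Type*} [LinearOrder γ]
    {A : Finset α} {B : Finset β} (hA : A.Nonempty) (hB : B.Nonempty) {f g : α → β → γ}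
    (hfg : ∀ a ∈ A, ∀ b ∈ B, f a b < g a b) :
    A.sup' hA (fun a => B.inf' hB (f a)) < A.sup' hA (fun a => B.inf' hB (g a)) := by
  refine (Finset.sup'_lt_iff hA).2 fun a ha => ?_
  have hinf : B.inf' hB (f a) < B.inf' hB (g a) :=
    (Finset.lt_inf'_iff hB).2 fun b hb => (Finset.inf'_le _ hb).trans_lt (hfg a ha b hb)
  exact hinf.trans_le (Finset.le_sup' (fun a => B.inf' hB (g a)) ha)

theorem Finset.weighted_avg_lt_weighted_avg {ι : Type*} {T : Finset ι} {w y y' : ι → ℝ}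
    (hw : ∀ i ∈ T, 0 ≤ w i) (hle : ∀ i ∈ T, y i ≤ y' i) {j : ι} (hj : j ∈ T)
    (hwj : 0 < w j) (hlt : y j < y' j) :
    (∑ i ∈ T, w i * y i) / (∑ i ∈ T, w i) < (∑ i ∈ T, w i * y' i) / (∑ i ∈ T, w i) := by
  have hden : 0 < ∑ i ∈ T, w i := Finset.sum_pos' hw ⟨j, hj, hwj⟩
  have hnum : ∑ i ∈ T, w i * y i < ∑ i ∈ T, w i * y' i :=
    Finset.sum_lt_sum (fun i hi => mul_le_mul_of_nonneg_left (hle i hi) (hw i hi))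
      ⟨j, hj, mul_lt_mul_of_pos_left hlt hwj⟩
  exact div_lt_div_of_pos_right hnum hden

/-- Every interval `[s a, s b]` of the minimax formula contains `j`, so each of its averages
strictly increases. -/
theorem isoVal_lt_isoVal {n : ℕ} {s w y y' : Fin n → ℝ} (hw : ∀ i, 0 ≤ w i) (hle : y ≤ y')
    {j : Fin n} (hwj : 0 < w j) (hlt : y j < y' j) :
    isoVal s w y j < isoVal s w y' j :=
  Finset.sup'_inf'_lt_sup'_inf' _ _ fun _ ha _ hb =>
    Finset.weighted_avg_lt_weighted_avg (fun i _ => hw i) (fun i _ => hle i)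
      (Finset.mem_filter.2
        ⟨Finset.mem_univ j, (Finset.mem_filter.1 ha).2, (Finset.mem_filter.1 hb).2⟩)
      hwj hlt

theorem stmt_17_general (k : ℕ) (s y : Fin (k + 1) → ℝ) :
    isoVal s (fun _ => 1) (Function.update y (Fin.last k) 0) (Fin.last k) <
    isoVal s (fun _ => 1) (Function.update y (Fin.last k) 1) (Fin.last k) :=
  isoVal_lt_isoVal (fun _ => zero_le_one) (update_le_update_iff'.2 zero_le_one)
    zero_lt_one (by simp)

/-- IVAP outputs satisfy `p₀ < p₁`: fitting isotonic regression after
appending the test point `(s, 1)` yields a strictly larger fitted value at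
the test point than after appending `(s, 0)`. -/
theorem stmt_17 (k : ℕ) (hk : 0 < k) (s y : Fin (k + 1) → ℝ)
    (hy : ∀ i, i ≠ Fin.last k → y i ∈ ({0, 1} : Set ℝ)) :
    isoVal s (fun _ => 1) (Function.update y (Fin.last k) 0) (Fin.last k) <
    isoVal s (fun _ => 1) (Function.update y (Fin.last k) 1) (Fin.last k) :=
  stmt_17_general k s y
end
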